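/- arXiv:quant-ph/0307205 — 4 statements merged into one kernel-verified Lean document; each statement's English description precedes it below -/
import Mathlib

section
/- Let ψ ∈ H_A ⊗ H_B and let P, P' be orthogonal projections on H_A, Q, Q' orthogonal projections on H_B. If ‖(P⊗I)ψ‖ = ‖(I⊗Q)ψ‖ = ‖(P⊗Q)ψ‖ and ‖(P'⊗I)ψ‖ = ‖(I⊗Q')ψ‖ = ‖(P'⊗Q')ψ‖, then ⟨ψ, (P'⊗I)(P⊗I)ψ⟩ = ‖(P'⊗I)(I⊗Q)ψ‖², and in particular ⟨ψ, (P'P ⊗ I)ψ⟩ is a nonnegative real number. -/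
open scoped ComplexInnerProductSpace

private lemma sa_inner_move {H : Type*} [NormedAddCommGroup H] [InnerProductSpace ℂ H]
    [FiniteDimensional ℂ H] (P : H →L[ℂ] H)
    (hPsa : ContinuousLinearMap.adjoint P = P) (x y : H) :
    ⟪P x, y⟫ = ⟪x, P y⟫ := by
  conv_lhs => rw [← hPsa]
  rw [ContinuousLinearMap.adjoint_inner_left]

private lemma proj_eq {H : Type*} [NormedAddCommGroup H] [InnerProductSpace ℂ H]
    [FiniteDimensional ℂ H] (P Q : H →L[ℂ] H)
    (hP : P ∘L P = P) (hPsa : ContinuousLinearMap.adjoint P = P)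
    (hQ : Q ∘L Q = Q) (hQsa : ContinuousLinearMap.adjoint Q = Q)
    (hc : P ∘L Q = Q ∘L P) (ψ : H)
    (h1 : ‖P ψ‖ = ‖Q ψ‖) (h2 : ‖Q ψ‖ = ‖P (Q ψ)‖) : P ψ = Q ψ := by
  have hQQ : Q (Q ψ) = Q ψ := by
    have := DFunLike.congr_fun hQ ψ; simpa using this
  have hPP : P (P (Q ψ)) = P (Q ψ) := by
    have := DFunLike.congr_fun hP (Q ψ); simpa using this
  have hcψ : Q (P ψ) = P (Q ψ) := by
    have := DFunLike.congr_fun hc ψ; simpa using this.symm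
  have key : ⟪P ψ, Q ψ⟫ = (‖P (Q ψ)‖ ^ 2 : ℝ) := by
    calc ⟪P ψ, Q ψ⟫ = ⟪P ψ, Q (Q ψ)⟫ := by rw [hQQ]
    _ = ⟪Q (P ψ), Q ψ⟫ := by rw [sa_inner_move Q hQsa]
    _ = ⟪P (Q ψ), Q ψ⟫ := by rw [hcψ]
    _ = ⟪P (P (Q ψ)), Q ψ⟫ := by rw [hPP]
    _ = ⟪P (Q ψ), P (Q ψ)⟫ := by rw [sa_inner_move P hPsa]
    _ = (‖P (Q ψ)‖ ^ 2 : ℝ) := by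
        rw [inner_self_eq_norm_sq_to_K]; norm_cast
  have hre : RCLike.re ⟪P ψ, Q ψ⟫ = ‖P (Q ψ)‖ ^ 2 := by
    rw [key]; norm_cast
  have hnorm : ‖P ψ - Q ψ‖ ^ 2 = 0 := by
    rw [@norm_sub_sq ℂ]
    rw [hre, h1, h2]; ring
  have := pow_eq_zero_iff (n := 2) (by norm_num) |>.mp hnorm
  rw [norm_eq_zero] at this
  exact sub_eq_zero.mp this


/-- With `P, P'` orthogonal projections acting on the `A` factor and `Q, Q'`
orthogonal projections acting on the `B` factor (abstracted by commutation of each `P` with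
each `Q`), if `‖Pψ‖ = ‖Qψ‖ = ‖P(Qψ)‖` and `‖P'ψ‖ = ‖Q'ψ‖ = ‖P'(Q'ψ)‖`, then
`⟨ψ, P'(Pψ)⟩ = ‖P'(Qψ)‖²`; in particular `⟨ψ, (P'P)ψ⟩` is a nonnegative real number. -/
theorem stmt5 {H : Type*} [NormedAddCommGroup H] [InnerProductSpace ℂ H]
    [FiniteDimensional ℂ H]
    (P P' Q Q' : H →L[ℂ] H)
    (hP : P ∘L P = P) (hPsa : ContinuousLinearMap.adjoint P = P)
    (hP' : P' ∘L P' = P') (hP'sa : ContinuousLinearMap.adjoint P' = P')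
    (hQ : Q ∘L Q = Q) (hQsa : ContinuousLinearMap.adjoint Q = Q)
    (hQ' : Q' ∘L Q' = Q') (hQ'sa : ContinuousLinearMap.adjoint Q' = Q')
    (hcomm : ∀ R ∈ ({P, P'} : Set (H →L[ℂ] H)), ∀ T ∈ ({Q, Q'} : Set (H →L[ℂ] H)),
      R ∘L T = T ∘L R)
    (ψ : H) (hψ : ‖ψ‖ = 1)
    (h1 : ‖P ψ‖ = ‖Q ψ‖) (h2 : ‖Q ψ‖ = ‖P (Q ψ)‖)
    (h1' : ‖P' ψ‖ = ‖Q' ψ‖) (h2' : ‖Q' ψ‖ = ‖P' (Q' ψ)‖) :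
    ⟪ψ, P' (P ψ)⟫ = (‖P' (Q ψ)‖ ^ 2 : ℝ) ∧
      ∃ r : ℝ, 0 ≤ r ∧ ⟪ψ, P' (P ψ)⟫ = (r : ℂ) := by
  have hPQeq : P ψ = Q ψ :=
    proj_eq P Q hP hPsa hQ hQsa (hcomm P (by simp) Q (by simp)) ψ h1 h2
  have hc' : P' ∘L Q = Q ∘L P' := hcomm P' (by simp) Q (by simp)
  have hQQ : Q (Q ψ) = Q ψ := by
    have := DFunLike.congr_fun hQ ψ; simpa using this
  have hP'P' : P' (P' (Q ψ)) = P' (Q ψ) := by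
    have := DFunLike.congr_fun hP' (Q ψ); simpa using this
  have hcψ : P' (Q ψ) = Q (P' ψ) := by
    have := DFunLike.congr_fun hc' ψ; simpa using this
  have main : ⟪ψ, P' (P ψ)⟫ = (‖P' (Q ψ)‖ ^ 2 : ℝ) := by
    calc ⟪ψ, P' (P ψ)⟫ = ⟪P' ψ, Q ψ⟫ := by
          rw [hPQeq, sa_inner_move P' hP'sa]
    _ = ⟪P' ψ, Q (Q ψ)⟫ := by rw [hQQ]
    _ = ⟪Q (P' ψ), Q ψ⟫ := by rw [sa_inner_move Q hQsa]
    _ = ⟪P' (Q ψ), Q ψ⟫ := by rw [hcψ]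
    _ = ⟪P' (P' (Q ψ)), Q ψ⟫ := by rw [hP'P']
    _ = ⟪P' (Q ψ), P' (Q ψ)⟫ := by rw [sa_inner_move P' hP'sa]
    _ = (‖P' (Q ψ)‖ ^ 2 : ℝ) := by
        rw [inner_self_eq_norm_sq_to_K]; norm_cast
  exact ⟨main, ‖P' (Q ψ)‖ ^ 2, by positivity, main⟩
end

section
/- For the Bell state Φ⁺ and angles α ≠ β from {−π/8, 0, π/8}, the four vectors (P^A_{(α,x)} ⊗ P^B_{(β,y)})Φ⁺, x,y ∈ {0,1}, are pairwise orthogonal, nonzero, and span all of ℂ² ⊗ ℂ². -/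
open Matrix Real
open scoped Kronecker

/-- The qubit state `cos θ|0⟩ + sin θ|1⟩`. -/
noncomputable def ketv (t : ℝ) : Fin 2 → ℂ := ![Real.cos t, Real.sin t]

/-- The rank-one projection `P_θ = |θ⟩⟨θ|` onto `cos θ|0⟩ + sin θ|1⟩`. -/
noncomputable def projM (t : ℝ) : Matrix (Fin 2) (Fin 2) ℂ :=
  fun i j => ketv t i * ketv t j

/-- The Bell state `Φ⁺ = (|00⟩ + |11⟩)/√2` as a vector on `Fin 2 × Fin 2`. -/
noncomputable def bell : Fin 2 × Fin 2 → ℂ :=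
  fun p => if p.1 = p.2 then ((Real.sqrt 2)⁻¹ : ℂ) else 0

lemma cosne (t : ℝ) (h1 : |t| < 3 * π / 2) (h2 : |t| ≠ π / 2) : Real.cos t ≠ 0 := by
  intro h
  rcases Real.cos_eq_zero_iff.mp h with ⟨k, hk⟩
  have hπ := Real.pi_pos
  have habs : |t| = |(2 * k + 1 : ℝ)| * (π / 2) := by
    rw [hk]
    rw [show ((2 * (k:ℝ) + 1) * π / 2) = (2 * (k:ℝ) + 1) * (π / 2) by ring, abs_mul,
      abs_of_pos (by positivity : (0:ℝ) < π / 2)]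
  have h3 : |(2 * k + 1 : ℝ)| < 3 := by nlinarith [habs ▸ h1, abs_nonneg (2 * (k:ℝ) + 1)]
  have h3' : |2 * k + 1| < 3 := by
    have : ((|2 * k + 1| : ℤ) : ℝ) < 3 := by rw [Int.cast_abs]; push_cast; push_cast at h3; exact h3
    exact_mod_cast this
  have h4 : k = -1 ∨ k = 0 := by
    rcases abs_lt.mp h3' with ⟨hl, hr⟩; omega
  apply h2
  rw [habs]
  rcases h4 with rfl | rfl <;> norm_num

lemma dotkey (a b a' b' : ℝ) :
    star ((projM a ⊗ₖ projM b).mulVec bell) ⬝ᵥ ((projM a' ⊗ₖ projM b').mulVec bell)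
    = ((2:ℂ)⁻¹ * Real.cos (a-b) * Real.cos (a'-b') * Real.cos (a-a') * Real.cos (b-b')) := by
  have h2 : ((Real.sqrt 2 : ℝ) : ℂ)⁻¹ * ((Real.sqrt 2 : ℝ) : ℂ)⁻¹ = (2:ℂ)⁻¹ := by
    rw [← mul_inv]
    norm_cast
    rw [Real.mul_self_sqrt (by norm_num : (0:ℝ) ≤ 2)]; norm_num
  simp only [dotProduct, Matrix.mulVec, Pi.star_apply, Fintype.sum_prod_type,
    Fin.sum_univ_two, Matrix.kroneckerMap_apply, projM, ketv, bell, Matrix.cons_val_zero,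
    Matrix.cons_val_one, Matrix.head_cons, Real.cos_sub]
  simp only [reduceIte, Fin.isValue, one_ne_zero, zero_ne_one, mul_zero, zero_mul,
    add_zero, zero_add, mul_one, star_add, star_mul', star_inv₀, Complex.star_def, Complex.conj_ofReal]
  rw [← h2]
  push_cast
  ring

/-- for angles `α ≠ β` from `{−π/8, 0, π/8}`, the four vectors
`(P^A_{(α,x)} ⊗ P^B_{(β,y)}) Φ⁺`, `x, y ∈ {0,1}`, are pairwise orthogonal, nonzero, and
span all of `ℂ² ⊗ ℂ²`. -/
theorem stmt13 (α β : ℝ)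
    (hα : α ∈ ({-(π / 8), 0, π / 8} : Set ℝ)) (hβ : β ∈ ({-(π / 8), 0, π / 8} : Set ℝ))
    (hαβ : α ≠ β)
    (f : Fin 2 × Fin 2 → (Fin 2 × Fin 2 → ℂ))
    (hf : ∀ x y : Fin 2, f (x, y)
      = (projM (α + (x : ℕ) * (π / 2)) ⊗ₖ projM (β + (y : ℕ) * (π / 2))).mulVec bell) :
    (∀ p q : Fin 2 × Fin 2, p ≠ q → star (f p) ⬝ᵥ f q = 0)
    ∧ (∀ p, f p ≠ 0)
    ∧ Submodule.span ℂ (Set.range f) = ⊤ := by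
  simp only [Set.mem_insert_iff, Set.mem_singleton_iff] at hα hβ
  have key : ∀ x y x' y' : Fin 2, star (f (x, y)) ⬝ᵥ f (x', y')
      = ((2:ℂ)⁻¹ * Real.cos ((α + (x:ℕ)*(π/2)) - (β + (y:ℕ)*(π/2)))
        * Real.cos ((α + (x':ℕ)*(π/2)) - (β + (y':ℕ)*(π/2)))
        * Real.cos ((α + (x:ℕ)*(π/2)) - (α + (x':ℕ)*(π/2)))
        * Real.cos ((β + (y:ℕ)*(π/2)) - (β + (y':ℕ)*(π/2)))) := by
    intro x y x' y'
    rw [hf, hf]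
    exact dotkey _ _ _ _
  have korth : ∀ (θ : ℝ) (x x' : Fin 2), x ≠ x' →
      Real.cos ((θ + (x:ℕ)*(π/2)) - (θ + (x':ℕ)*(π/2))) = 0 := by
    intro θ x x' h
    fin_cases x <;> fin_cases x' <;> simp_all
  have cne : ∀ x y : Fin 2, Real.cos ((α + (x:ℕ)*(π/2)) - (β + (y:ℕ)*(π/2))) ≠ 0 := by
    intro x y
    have hπ := Real.pi_pos
    rcases hα with rfl | rfl | rfl <;> rcases hβ with rfl | rfl | rfl <;>
      first
      | exact absurd rfl hαβ
      | (fin_cases x <;> fin_cases y <;>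
          (refine cosne _ ?_ ?_
           · rw [abs_lt]; push_cast; constructor <;> linarith
           · intro h
             rcases (abs_eq (by positivity : (0:ℝ) ≤ π / 2)).mp h with h | h <;>
               push_cast at h <;> linarith))
  have horth : ∀ p q : Fin 2 × Fin 2, p ≠ q → star (f p) ⬝ᵥ f q = 0 := by
    rintro ⟨x, y⟩ ⟨x', y'⟩ hne
    rw [key]
    rcases (by by_contra hc; push_neg at hc; exact hne (by rw [Prod.mk.injEq]; exact hc) :
        x ≠ x' ∨ y ≠ y') with h | h
    · rw [korth α x x' h]; simp
    · rw [korth β y y' h]; simp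
  have hself : ∀ x y : Fin 2, star (f (x, y)) ⬝ᵥ f (x, y) ≠ 0 := by
    intro x y
    rw [key]
    simp only [sub_self, Real.cos_zero, Complex.ofReal_one, mul_one]
    have hcc := Complex.ofReal_ne_zero.mpr (cne x y)
    exact mul_ne_zero (mul_ne_zero (by norm_num) hcc) hcc
  have hnz : ∀ p, f p ≠ 0 := by
    rintro ⟨x, y⟩ h0
    exact hself x y (by rw [h0]; simp)
  refine ⟨horth, hnz, ?_⟩
  let g : Fin 2 × Fin 2 → EuclideanSpace ℂ (Fin 2 × Fin 2) :=
    fun p => (WithLp.equiv 2 _).symm (f p)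
  have hgli : LinearIndependent ℂ g := by
    apply linearIndependent_of_ne_zero_of_inner_eq_zero
    · intro p hp
      apply hnz p
      have := congrArg (WithLp.equiv 2 (Fin 2 × Fin 2 → ℂ)) hp
      simpa [g] using this
    · intro p q hpq
      rw [EuclideanSpace.inner_eq_star_dotProduct, dotProduct_comm]
      exact horth p q hpq
  have hfli : LinearIndependent ℂ f := by
    have hfg : f = (WithLp.linearEquiv 2 ℂ (Fin 2 × Fin 2 → ℂ)) ∘ g := by
      funext p; simp [g]
    rw [hfg]
    exact hgli.map' _ (LinearEquiv.ker _)
  apply hfli.span_eq_top_of_card_eq_finrank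
  simp [Module.finrank_fintype_fun_eq_card]
end

section
/- Let ψ ∈ H_A ⊗ H_B be a unit vector whose reduced density operators have full support on H_A and H_B. Suppose U_A : H_A → K_A and U_B : H_B → K_B are linear maps such that (U_A† U_A ⊗ I)ψ = ψ and (I ⊗ U_B† U_B)ψ = ψ. Then U_A and U_B are isometries. -/
open Matrix

lemma exists_right_inv' {m n : ℕ} (M : Matrix (Fin m) (Fin n) ℂ) (h : M.rank = m) :
    ∃ N : Matrix (Fin n) (Fin m) ℂ, M * N = 1 := by
  have hsurj : Function.Surjective M.mulVecLin := by
    rw [← LinearMap.range_eq_top]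
    apply Submodule.eq_top_of_finrank_eq
    simpa [Matrix.rank] using h
  obtain ⟨g, hg⟩ := M.mulVecLin.exists_rightInverse_of_surjective (LinearMap.range_eq_top.2 hsurj)
  refine ⟨LinearMap.toMatrix' g, ?_⟩
  have : LinearMap.toMatrix' (M.mulVecLin ∘ₗ g) = 1 := by rw [hg]; simp
  rw [LinearMap.toMatrix'_comp] at this
  rwa [show LinearMap.toMatrix' M.mulVecLin = M by
    rw [← Matrix.toLin'_apply']; exact LinearMap.toMatrix'_toLin' M] at this

/-- A unit vector `ψ ∈ H_A ⊗ H_B` is represented by its coefficient matrix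
`M : Matrix (Fin m) (Fin n) ℂ`; the reduced density operators have full support iff
`rank M = m` and `rank M = n`.  The operator `(U_A† U_A ⊗ I)` acts on coefficients as
`M ↦ (Uᴴ * U) * M`, and `(I ⊗ U_B† U_B)` as `M ↦ M * (Vᴴ * V)ᵀ`.  If these fix `ψ`, then
`U_A` and `U_B` are isometries, i.e. `Uᴴ * U = 1` and `Vᴴ * V = 1`. -/
theorem stmt14 {m n k l : ℕ} (M : Matrix (Fin m) (Fin n) ℂ)
    (hunit : ∑ i, ∑ j, ‖M i j‖ ^ 2 = 1)
    (hfullA : M.rank = m) (hfullB : M.rank = n)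
    (U : Matrix (Fin k) (Fin m) ℂ) (V : Matrix (Fin l) (Fin n) ℂ)
    (hU : (Uᴴ * U) * M = M) (hV : M * (Vᴴ * V)ᵀ = M) :
    Uᴴ * U = 1 ∧ Vᴴ * V = 1 := by
  obtain ⟨N, hN⟩ := exists_right_inv' M hfullA
  have hT : (Mᵀ).rank = n := by rw [Matrix.rank_transpose]; exact hfullB
  obtain ⟨N', hN'⟩ := exists_right_inv' Mᵀ hT
  have hL : N'ᵀ * M = 1 := by
    have := congrArg Matrix.transpose hN'
    simpa [Matrix.transpose_mul] using this
  constructor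
  · calc Uᴴ * U = (Uᴴ * U) * (M * N) := by rw [hN, Matrix.mul_one]
    _ = ((Uᴴ * U) * M) * N := by simp [Matrix.mul_assoc]
    _ = 1 := by rw [hU, hN]
  · have : (Vᴴ * V)ᵀ = 1 := by
      calc (Vᴴ * V)ᵀ = (N'ᵀ * M) * (Vᴴ * V)ᵀ := by rw [hL, Matrix.one_mul]
      _ = N'ᵀ * (M * (Vᴴ * V)ᵀ) := by rw [Matrix.mul_assoc]
      _ = 1 := by rw [hV, hL]
    have := congrArg Matrix.transpose this
    simpa using this
end

section
/- Let ψ ∈ H_A ⊗ H_B and let P_α, P_γ be projections acting on H_A and Q_α, Q_γ projections acting on H_B such that (P_α ⊗ I)ψ = (I ⊗ Q_α)ψ and (P_γ ⊗ I)ψ = (I ⊗ Q_γ)ψ. Then ‖((P_α − P_γ) ⊗ I)ψ‖² = ‖(P_α⊗I)ψ‖² + ‖(P_γ⊗I)ψ‖² − 2‖(P_γ ⊗ Q_α)ψ‖². -/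
open scoped ComplexInnerProductSpace

/-- With projections `Pα, Pγ` acting on the `A` factor and `Qα, Qγ` acting on
the `B` factor (abstracted by commutation of the `P`'s with the `Q`'s), if
`(Pα ⊗ I)ψ = (I ⊗ Qα)ψ` and `(Pγ ⊗ I)ψ = (I ⊗ Qγ)ψ`, then
`‖((Pα − Pγ) ⊗ I)ψ‖² = ‖Pα ψ‖² + ‖Pγ ψ‖² − 2‖(Pγ ⊗ Qα)ψ‖²`. -/
theorem stmt17 {H : Type*} [NormedAddCommGroup H] [InnerProductSpace ℂ H]
    [FiniteDimensional ℂ H]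
    (Pα Pγ Qα Qγ : H →L[ℂ] H)
    (hPα : Pα ∘L Pα = Pα) (hPαsa : ContinuousLinearMap.adjoint Pα = Pα)
    (hPγ : Pγ ∘L Pγ = Pγ) (hPγsa : ContinuousLinearMap.adjoint Pγ = Pγ)
    (hQα : Qα ∘L Qα = Qα) (hQαsa : ContinuousLinearMap.adjoint Qα = Qα)
    (hQγ : Qγ ∘L Qγ = Qγ) (hQγsa : ContinuousLinearMap.adjoint Qγ = Qγ)
    (hcomm : ∀ R ∈ ({Pα, Pγ} : Set (H →L[ℂ] H)), ∀ T ∈ ({Qα, Qγ} : Set (H →L[ℂ] H)),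
      R ∘L T = T ∘L R)
    (ψ : H) (hα : Pα ψ = Qα ψ) (hγ : Pγ ψ = Qγ ψ) :
    ‖(Pα - Pγ) ψ‖ ^ 2 = ‖Pα ψ‖ ^ 2 + ‖Pγ ψ‖ ^ 2 - 2 * ‖Pγ (Qα ψ)‖ ^ 2 := by
  have hγα : Qα (Pγ ψ) = Pγ (Qα ψ) := by
    have := hcomm Pγ (by simp) Qα (by simp)
    exact congrFun (congrArg (fun f => f.toFun) this.symm) ψ
  have key : ⟪Pα ψ, Pγ ψ⟫ = (‖Pγ (Qα ψ)‖ : ℂ) ^ 2 := by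
    calc ⟪Pα ψ, Pγ ψ⟫ = ⟪Qα ψ, Pγ ψ⟫ := by rw [hα]
      _ = ⟪Qα (Qα ψ), Pγ ψ⟫ := by
          rw [show Qα (Qα ψ) = Qα ψ from congrFun (congrArg (fun f => f.toFun) hQα) ψ]
      _ = ⟪Qα ψ, Qα (Pγ ψ)⟫ := by
          rw [← ContinuousLinearMap.adjoint_inner_right Qα, hQαsa]
      _ = ⟪Qα ψ, Pγ (Qα ψ)⟫ := by rw [hγα]
      _ = ⟪Qα ψ, Pγ (Pγ (Qα ψ))⟫ := by
          rw [show Pγ (Pγ (Qα ψ)) = Pγ (Qα ψ) from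
            congrFun (congrArg (fun f => f.toFun) hPγ) (Qα ψ)]
      _ = ⟪Pγ (Qα ψ), Pγ (Qα ψ)⟫ := by
          conv_lhs => rw [show Pγ (Pγ (Qα ψ)) = ContinuousLinearMap.adjoint Pγ (Pγ (Qα ψ)) by
            rw [hPγsa]]
          rw [ContinuousLinearMap.adjoint_inner_right]
      _ = (‖Pγ (Qα ψ)‖ : ℂ) ^ 2 := by
          rw [inner_self_eq_norm_sq_to_K]; norm_cast
  have hn : ‖(Pα - Pγ) ψ‖ ^ 2 = ‖Pα ψ - Pγ ψ‖ ^ 2 := by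
    simp [ContinuousLinearMap.sub_apply]
  rw [hn, @norm_sub_sq ℂ _ _ _ _ (Pα ψ) (Pγ ψ), key]
  simp [← Complex.ofReal_pow]
  ring
end
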